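/- Newton–Maclaurin consequence: for λ ∈ Γ_k ⊂ ℝⁿ with k ≥ 2, σ_{k−1}(λ) ≥ c(n,k) · σ₁(λ)^{1/(k−1)} · σ_k(λ)^{(k−2)/(k−1)} for some positive constant c(n,k) depending only on n and k. -/

import Mathlib

/-!
Write `E_j = σ_j / (n choose j)`. Newton's inequalities `E_m E_{m+2} ≤ E_{m+1}²` hold for every real
vector: differentiating `∏ (X - λ_i)` keeps all roots real (Rolle) and leaves the `E_j` unchanged,
so one may assume `n = m + 2`; inverting the `λ_i` then turns the claim into `E_2 ≤ E_1²`, which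
after differentiating down to two numbers is AM–GM. On `Γ_k` the `E_1, …, E_k` are positive, so
chaining Newton's inequalities gives `E_1 E_k^(k-2) ≤ E_{k-1}^(k-1)`; take `(k-1)`-th roots.
-/

/-- The `m`-th elementary symmetric polynomial of `x : Fin n → ℝ`. -/
noncomputable def esymm (n m : ℕ) (x : Fin n → ℝ) : ℝ :=
  ∑ s ∈ Finset.powersetCard m (Finset.univ : Finset (Fin n)), ∏ i ∈ s, x i

theorem mul_pow_le_pow_succ_of_log_concave {a : ℕ → ℝ} {i : ℕ}
    (hpos : ∀ j, 1 ≤ j → j ≤ i + 2 → 0 < a j)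
    (hlc : ∀ m, 1 ≤ m → m + 2 ≤ i + 2 → a m * a (m + 2) ≤ a (m + 1) ^ 2) :
    a 1 * a (i + 2) ^ i ≤ a (i + 1) ^ (i + 1) := by
  induction i with
  | zero => simp
  | succ i ih =>
    have ih := ih (fun j h1 h2 => hpos j h1 (by omega)) (fun m h1 h2 => hlc m h1 (by omega))
    have hnewton := hlc (i + 1) (by omega) le_rfl
    have := hpos (i + 1) (by omega) (by omega)
    have := hpos (i + 3) (by omega) le_rfl
    refine le_of_mul_le_mul_right ?_ (pow_pos (hpos (i + 2) (by omega) (by omega)) i)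
    calc a 1 * a (i + 3) ^ (i + 1) * a (i + 2) ^ i
        = a 1 * a (i + 2) ^ i * a (i + 3) ^ (i + 1) := by ring
      _ ≤ a (i + 1) ^ (i + 1) * a (i + 3) ^ (i + 1) := by gcongr
      _ = (a (i + 1) * a (i + 3)) ^ (i + 1) := by ring
      _ ≤ (a (i + 2) ^ 2) ^ (i + 1) := by gcongr
      _ = a (i + 2) ^ (i + 2) * a (i + 2) ^ i := by ring

theorem Real.rpow_mul_rpow_mul_rpow_le_of_mul_le_pow {c x y z : ℝ} {i : ℕ} (hc : 0 ≤ c)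
    (hx : 0 ≤ x) (hy : 0 ≤ y) (hz : 0 ≤ z) (h : c * (x * z ^ i) ≤ y ^ (i + 1)) :
    c ^ (1 / (i + 1 : ℝ)) * x ^ (1 / (i + 1 : ℝ)) * z ^ ((i : ℝ) / (i + 1)) ≤ y :=
  calc c ^ (1 / (i + 1 : ℝ)) * x ^ (1 / (i + 1 : ℝ)) * z ^ ((i : ℝ) / (i + 1))
      = (c * (x * z ^ i)) ^ (1 / (i + 1 : ℝ)) := by
        rw [Real.mul_rpow hc (by positivity), Real.mul_rpow hx (by positivity),
          ← Real.rpow_natCast z i, ← Real.rpow_mul hz, mul_one_div, mul_assoc]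
    _ ≤ (y ^ (i + 1)) ^ (1 / (i + 1 : ℝ)) := by gcongr
    _ = y := by
        rw [← Real.rpow_natCast, ← Real.rpow_mul hy, Nat.cast_add_one,
          mul_one_div_cancel (by positivity), Real.rpow_one]

open Polynomial

theorem Polynomial.Splits.derivative_of_real {p : ℝ[X]} (hp : p.Splits) : p.derivative.Splits := by
  rw [splits_iff_card_roots] at hp ⊢
  have := card_roots_le_derivative p
  have := card_roots' p.derivative
  have := natDegree_derivative_le p
  omega

namespace Multiset

section CommSemiring

variable {R : Type*} [CommSemiring R]

@[simp]
theorem esymm_zero_right (s : Multiset R) : s.esymm 0 = 1 := by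
  simp [esymm]

theorem esymm_cons_succ (a : R) (s : Multiset R) (j : ℕ) :
    (a ::ₘ s).esymm (j + 1) = s.esymm (j + 1) + a * s.esymm j := by
  simp only [esymm, powersetCard_cons, map_add, sum_add, map_map, Function.comp_def, prod_cons,
    sum_map_mul_left]

theorem esymm_eq_zero_of_card_lt {s : Multiset R} {j : ℕ} (h : card s < j) : s.esymm j = 0 := by
  simp [esymm, powersetCard_eq_empty _ h]

theorem esymm_card (s : Multiset R) : s.esymm (card s) = s.prod := by
  induction s using Multiset.induction with
  | empty => simp
  | cons a s ih =>
    rw [card_cons, esymm_cons_succ, esymm_eq_zero_of_card_lt (Nat.lt_succ_self _), ih, prod_cons,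
      zero_add]

end CommSemiring

theorem esymm_card_sub_eq_prod_mul_esymm_map_inv {K : Type*} [Field K] {s : Multiset K}
    (h0 : (0 : K) ∉ s) {j : ℕ} (hj : j ≤ card s) :
    s.esymm (card s - j) = s.prod * (s.map (·⁻¹)).esymm j := by
  induction s using Multiset.induction generalizing j with
  | empty => simp_all
  | cons a s ih =>
    have ha : a ≠ 0 := fun h => h0 (h ▸ mem_cons_self a s)
    have hs : (0 : K) ∉ s := fun h => h0 (mem_cons_of_mem h)
    rw [card_cons] at hj ⊢
    rcases j with _ | j
    · simpa using esymm_card (a ::ₘ s)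
    rw [map_cons, esymm_cons_succ, prod_cons]
    rcases (Nat.le_of_succ_le_succ hj).eq_or_lt with rfl | hlt
    · have hinv : (s.map (·⁻¹)).esymm (card s) = s.prod⁻¹ := by
        simpa [prod_map_inv'] using esymm_card (s.map (·⁻¹))
      rw [Nat.sub_self, esymm_zero_right, esymm_eq_zero_of_card_lt (by simp), hinv]
      field_simp [prod_ne_zero hs]
      ring
    · rw [show card s + 1 - (j + 1) = card s - (j + 1) + 1 by omega, esymm_cons_succ,
        ih hs hlt, show card s - (j + 1) + 1 = card s - j by omega, ih hs hlt.le]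
      field_simp
      ring

/-- The normalised elementary symmetric function `E_j = esymm s j / (card s).choose j`; it equals
`a ^ j` when every element of `s` is `a`, and `0` when `j > card s`. -/
noncomputable def esymmMean {K : Type*} [Semifield K] (s : Multiset K) (j : ℕ) : K :=
  s.esymm j / (card s).choose j

@[simp]
theorem esymmMean_zero_right {K : Type*} [Semifield K] (s : Multiset K) : s.esymmMean 0 = 1 := by
  simp [esymmMean]

/-- `t` is the multiset of roots of the derivative of `∏ a ∈ s, (X - a)`; by Rolle's theorem it
has `card s - 1` elements. -/
theorem exists_card_eq_esymmMean_eq_of_card_eq_succ {s : Multiset ℝ} {n : ℕ}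
    (hs : card s = n + 1) :
    ∃ t : Multiset ℝ, card t = n ∧ ∀ j ≤ n, t.esymmMean j = s.esymmMean j := by
  set p : ℝ[X] := (s.map (X - C ·)).prod
  have hp_monic : p.Monic := monic_multiset_prod_of_monic _ _ fun a _ => monic_X_sub_C a
  have hp_roots : p.roots = s := roots_multiset_prod_X_sub_C s
  have hp_deg : p.natDegree = n + 1 := by rw [natDegree_multiset_prod_X_sub_C_eq_card, hs]
  have hp_split : p.Splits := splits_iff_card_roots.mpr (by rw [hp_roots, hp_deg, hs])
  have hq_split := hp_split.derivative_of_real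
  have hq_deg : p.derivative.natDegree = n := by
    have := card_roots_le_derivative p
    rw [hp_roots, hs] at this
    have := natDegree_derivative_le p
    rw [splits_iff_card_roots] at hq_split
    omega
  have hq_lead : p.derivative.leadingCoeff = n + 1 := by
    rw [leadingCoeff, hq_deg, coeff_derivative, ← hp_deg, hp_monic.coeff_natDegree, one_mul]
  have hq_card : card p.derivative.roots = n := by rw [splits_iff_card_roots.mp hq_split, hq_deg]
  refine ⟨p.derivative.roots, hq_card, fun j hj => ?_⟩
  have hq := coeff_eq_esymm_roots_of_splits hq_split (k := n - j) (by omega)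
  have hp := coeff_eq_esymm_roots_of_splits hp_split (k := n - j + 1) (by omega)
  rw [hq_deg, Nat.sub_sub_self hj, hq_lead, coeff_derivative] at hq
  rw [hp_deg, hp_monic.leadingCoeff, hp_roots, show n + 1 - (n - j + 1) = j by omega] at hp
  have key : p.derivative.roots.esymm j * (n + 1) = s.esymm j * (n - j + 1) := by
    rw [hp, Nat.cast_sub hj] at hq
    refine mul_left_cancel₀ (pow_ne_zero j (neg_ne_zero.mpr one_ne_zero) : (-1 : ℝ) ^ j ≠ 0) ?_
    linear_combination -hq
  have hchoose : (n.choose j : ℝ) * (n + 1) = (n + 1).choose j * (n - j + 1) := by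
    rw [← Nat.cast_sub hj]
    exact_mod_cast (show n + 1 - j = n - j + 1 by omega) ▸ Nat.choose_mul_succ_eq n j
  have hpos : (0 : ℝ) < n - j + 1 := by
    have : (j : ℝ) ≤ n := by exact_mod_cast hj
    linarith
  rw [esymmMean, esymmMean, hq_card, hs,
    div_eq_div_iff (Nat.cast_ne_zero.mpr (Nat.choose_pos hj).ne')
      (Nat.cast_ne_zero.mpr (Nat.choose_pos (by omega)).ne')]
  refine mul_left_cancel₀ hpos.ne' ?_
  linear_combination (-p.derivative.roots.esymm j) * hchoose + (n.choose j : ℝ) * key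

theorem exists_card_eq_esymmMean_eq_of_le {s : Multiset ℝ} {d : ℕ} (hd : d ≤ card s) :
    ∃ t : Multiset ℝ, card t = d ∧ ∀ j ≤ d, t.esymmMean j = s.esymmMean j := by
  obtain ⟨n, hn⟩ := Nat.exists_eq_add_of_le hd
  induction n generalizing s with
  | zero => exact ⟨s, hn, fun _ _ => rfl⟩
  | succ n ih =>
    obtain ⟨u, hu, hus⟩ := exists_card_eq_esymmMean_eq_of_card_eq_succ (n := d + n) hn
    obtain ⟨t, ht, htu⟩ := ih (hu ▸ Nat.le_add_right d n) hu
    exact ⟨t, ht, fun j hj => (htu j hj).trans (hus j (by omega))⟩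

theorem esymmMean_two_le_sq {s : Multiset ℝ} (hs : 2 ≤ card s) :
    s.esymmMean 2 ≤ s.esymmMean 1 ^ 2 := by
  obtain ⟨t, ht, hts⟩ := exists_card_eq_esymmMean_eq_of_le hs
  rw [← hts 1 (by omega), ← hts 2 le_rfl]
  obtain ⟨a, b, rfl⟩ := card_eq_two.mp ht
  simp [esymmMean]
  nlinarith [sq_nonneg (a - b)]

theorem esymmMean_card_sub_eq_prod_mul_esymmMean_map_inv {s : Multiset ℝ} (h0 : (0 : ℝ) ∉ s)
    {j : ℕ} (hj : j ≤ card s) :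
    s.esymmMean (card s - j) = s.prod * (s.map (·⁻¹)).esymmMean j := by
  rw [esymmMean, esymmMean, esymm_card_sub_eq_prod_mul_esymm_map_inv h0 hj, card_map,
    Nat.choose_symm hj, mul_div_assoc]

theorem esymmMean_mul_esymmMean_le_sq_of_card_eq {s : Multiset ℝ} {m : ℕ} (hs : card s = m + 2) :
    s.esymmMean m * s.esymmMean (m + 2) ≤ s.esymmMean (m + 1) ^ 2 := by
  by_cases h0 : (0 : ℝ) ∈ s
  · have hzero : s.esymm (m + 2) = 0 := by rw [← hs, esymm_card, prod_eq_zero h0]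
    simp only [esymmMean, hzero, zero_div, mul_zero]
    positivity
  have hinv := fun j (hj : j ≤ m + 2) =>
    hs ▸ esymmMean_card_sub_eq_prod_mul_esymmMean_map_inv h0 (hs ▸ hj)
  have h2 := esymmMean_two_le_sq (s := s.map (·⁻¹)) (by simp [hs])
  have e0 := hinv 0 (by omega)
  have e1 := hinv 1 (by omega)
  have e2 := hinv 2 (by omega)
  simp only [Nat.sub_zero, esymmMean_zero_right, mul_one] at e0
  rw [show m + 2 - 1 = m + 1 by omega] at e1
  rw [Nat.add_sub_cancel] at e2
  rw [e0, e1, e2]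
  nlinarith [mul_le_mul_of_nonneg_left h2 (sq_nonneg s.prod)]

theorem esymmMean_mul_esymmMean_le_sq (s : Multiset ℝ) (m : ℕ) :
    s.esymmMean m * s.esymmMean (m + 2) ≤ s.esymmMean (m + 1) ^ 2 := by
  rcases lt_or_ge (card s) (m + 2) with h | h
  · simp only [esymmMean, esymm_eq_zero_of_card_lt h, zero_div, mul_zero]
    positivity
  obtain ⟨t, ht, hts⟩ := exists_card_eq_esymmMean_eq_of_le h
  rw [← hts m (by omega), ← hts (m + 1) (by omega), ← hts (m + 2) le_rfl]
  exact esymmMean_mul_esymmMean_le_sq_of_card_eq ht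

theorem esymm_one_mul_esymm_pow_le {s : Multiset ℝ} {i : ℕ}
    (hpos : ∀ j, 1 ≤ j → j ≤ i + 2 → 0 < s.esymm j) :
    ((card s).choose (i + 1) : ℝ) ^ (i + 1) / (card s * (card s).choose (i + 2) ^ i) *
      (s.esymm 1 * s.esymm (i + 2) ^ i) ≤ s.esymm (i + 1) ^ (i + 1) := by
  have hcard : i + 2 ≤ card s := le_of_not_gt fun h =>
    (hpos (i + 2) (by omega) le_rfl).ne' (esymm_eq_zero_of_card_lt h)
  have hchoose : ∀ j ≤ i + 2, (0 : ℝ) < (card s).choose j := fun j hj =>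
    Nat.cast_pos.mpr (Nat.choose_pos (by omega))
  have key := mul_pow_le_pow_succ_of_log_concave (a := s.esymmMean)
    (fun j h1 h2 => div_pos (hpos j h1 h2) (hchoose j h2))
    (fun m _ _ => esymmMean_mul_esymmMean_le_sq s m)
  have : (0 : ℝ) < card s := Nat.cast_pos.mpr (by omega)
  have := hchoose (i + 1) (by omega)
  have := hchoose (i + 2) le_rfl
  simp only [esymmMean, Nat.choose_one_right, div_pow] at key
  rw [div_mul_div_comm, div_le_div_iff₀ (by positivity) (by positivity)] at key
  rw [div_mul_eq_mul_div, div_le_iff₀ (by positivity)]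
  linarith

end Multiset

theorem stmt15 (n k : ℕ) (hk : 2 ≤ k) (hkn : k ≤ n) :
    ∃ c : ℝ, 0 < c ∧
      ∀ lam : Fin n → ℝ,
        (∀ m, 1 ≤ m → m ≤ k → 0 < esymm n m lam) →
        esymm n (k - 1) lam
          ≥ c * esymm n 1 lam ^ ((1 : ℝ) / (k - 1 : ℝ))
              * esymm n k lam ^ (((k : ℝ) - 2) / ((k : ℝ) - 1)) := by
  obtain ⟨i, rfl⟩ : ∃ i, k = i + 2 := ⟨k - 2, by omega⟩
  have hc : (0 : ℝ) < (n.choose (i + 1) : ℝ) ^ (i + 1) / (n * n.choose (i + 2) ^ i) := by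
    have := Nat.choose_pos (show i + 1 ≤ n by omega)
    have := Nat.choose_pos hkn
    have : 0 < n := by omega
    positivity
  refine ⟨_ ^ (1 / (i + 1 : ℝ)), Real.rpow_pos_of_pos hc _, fun lam hlam => ?_⟩
  have hesymm (j : ℕ) : esymm n j lam = (Finset.univ.val.map lam).esymm j :=
    (Finset.esymm_map_val lam Finset.univ j).symm
  have key := Multiset.esymm_one_mul_esymm_pow_le (s := Finset.univ.val.map lam) (i := i)
    fun j h1 h2 => hesymm j ▸ hlam j h1 h2
  simp only [Multiset.card_map, Finset.card_val, Finset.card_univ, Fintype.card_fin,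
    ← hesymm] at key
  have hk1 : ((i + 2 : ℕ) : ℝ) - 1 = i + 1 := by push_cast; ring
  have hk2 : ((i + 2 : ℕ) : ℝ) - 2 = i := by push_cast; ring
  rw [show i + 2 - 1 = i + 1 by omega, hk1, hk2]
  exact Real.rpow_mul_rpow_mul_rpow_le_of_mul_le_pow hc.le (hlam 1 le_rfl (by omega)).le
    (hlam (i + 1) (by omega) (by omega)).le (hlam (i + 2) (by omega) le_rfl).le key
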